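/- Let m ≥ 2 and n = (m−1)² + 1. Suppose L ⊂ R^{m×m} is an n-dimensional subspace containing no rank-one matrix. If T ∈ R^{m×m×n} is any tensor whose n slices in the third direction form a basis of L, then rank_R(T) > n. -/

import Mathlib

/-!
Suppose `T = ∑_{s < k} x_s ⊗ y_s ⊗ z_s` with `k ≤ n`. Every slice of `T` is a combination of the
rank-one matrices `x_s y_sᵀ`, so `L` lies in their span `W`, and `dim W ≤ k ≤ n = dim L` forces
`W = L`. Then each `x_s y_sᵀ` lies in `L`, which contains no matrix of rank one, so all of them
vanish and `L = W = 0`, contradicting `n ≥ 1`.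
-/

open scoped BigOperators

/-- The real rank of a 3-tensor: the minimal number of rank-one tensors summing to it. -/
noncomputable def trank {m1 m2 m3 : ℕ} (T : Fin m1 → Fin m2 → Fin m3 → ℝ) : ℕ :=
  sInf {k | ∃ (x : Fin k → Fin m1 → ℝ) (y : Fin k → Fin m2 → ℝ) (z : Fin k → Fin m3 → ℝ),
    ∀ i j l, T i j l = ∑ s, x s i * y s j * z s l}

open Matrix Module Submodule

def HasRankDecomposition {m₁ m₂ m₃ : ℕ} (T : Fin m₁ → Fin m₂ → Fin m₃ → ℝ) (k : ℕ) : Prop :=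
  ∃ (x : Fin k → Fin m₁ → ℝ) (y : Fin k → Fin m₂ → ℝ) (z : Fin k → Fin m₃ → ℝ),
    ∀ i j l, T i j l = ∑ s, x s i * y s j * z s l

section TensorRank

variable {m₁ m₂ m₃ : ℕ} (T : Fin m₁ → Fin m₂ → Fin m₃ → ℝ)

theorem hasRankDecomposition_card {ι : Type*} [Fintype ι] (x : ι → Fin m₁ → ℝ)
    (y : ι → Fin m₂ → ℝ) (z : ι → Fin m₃ → ℝ)
    (h : ∀ i j l, T i j l = ∑ s, x s i * y s j * z s l) :
    HasRankDecomposition T (Fintype.card ι) := by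
  let e := (Fintype.equivFin ι).symm
  refine ⟨x ∘ e, y ∘ e, z ∘ e, fun i j l => ?_⟩
  rw [h]
  exact (Fintype.sum_equiv e _ _ fun _ => rfl).symm

theorem hasRankDecomposition_slices :
    HasRankDecomposition T (Fintype.card (Fin m₁ × Fin m₂)) := by
  classical
  refine hasRankDecomposition_card T (fun a => Pi.single a.1 1) (fun a => Pi.single a.2 1)
    (fun a l => T a.1 a.2 l) fun i j l => ?_
  simp [Fintype.sum_prod_type, Pi.single_apply]

theorem hasRankDecomposition_trank : HasRankDecomposition T (trank T) :=
  Nat.sInf_mem (s := {k | HasRankDecomposition T k}) ⟨_, hasRankDecomposition_slices T⟩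

theorem slice_eq_sum_smul_vecMulVec {k : ℕ} {x : Fin k → Fin m₁ → ℝ} {y : Fin k → Fin m₂ → ℝ}
    {z : Fin k → Fin m₃ → ℝ} (h : ∀ i j l, T i j l = ∑ s, x s i * y s j * z s l) (p : Fin m₃) :
    (Matrix.of fun i j => T i j p) = ∑ s, z s p • vecMulVec (x s) (y s) := by
  ext i j
  simp only [of_apply, h, Matrix.sum_apply, Matrix.smul_apply, vecMulVec_apply, smul_eq_mul]
  exact Finset.sum_congr rfl fun _ _ => by ring

theorem slice_mem_span_vecMulVec {k : ℕ} {x : Fin k → Fin m₁ → ℝ} {y : Fin k → Fin m₂ → ℝ}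
    {z : Fin k → Fin m₃ → ℝ} (h : ∀ i j l, T i j l = ∑ s, x s i * y s j * z s l) (p : Fin m₃) :
    (Matrix.of fun i j => T i j p) ∈ span ℝ (Set.range fun s => vecMulVec (x s) (y s)) := by
  rw [slice_eq_sum_smul_vecMulVec T h p]
  exact sum_mem fun s _ => smul_mem _ _ (subset_span ⟨s, rfl⟩)

end TensorRank

theorem Matrix.eq_zero_of_rank_eq_zero {m n K : Type*} [Fintype m] [Fintype n] [Field K]
    {A : Matrix m n K} (h : A.rank = 0) : A = 0 := by
  classical
  rw [Matrix.rank, finrank_eq_zero, LinearMap.range_eq_bot, ← toLin'_apply'] at h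
  exact toLin'.injective (h.trans toLin'.map_zero.symm)

theorem Matrix.vecMulVec_eq_zero_of_mem {m n K : Type*} [Fintype m] [Fintype n] [Field K]
    {L : Submodule K (Matrix m n K)} (hL : ∀ A ∈ L, A.rank ≠ 1) {u : m → K} {v : n → K}
    (huv : vecMulVec u v ∈ L) : vecMulVec u v = 0 :=
  eq_zero_of_rank_eq_zero <|
    (Nat.le_one_iff_eq_zero_or_eq_one.1 (rank_vecMulVec_le u v)).resolve_right (hL _ huv)

theorem Submodule.range_subset_of_le_span_of_card_le_finrank {K V ι : Type*} [DivisionRing K]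
    [AddCommGroup V] [Module K V] [Fintype ι] {W : Submodule K V} {v : ι → V}
    (hle : W ≤ span K (Set.range v)) (hcard : Fintype.card ι ≤ finrank K W) :
    Set.range v ⊆ W := by
  have := FiniteDimensional.span_of_finite K (Set.finite_range v)
  have hW : W = span K (Set.range v) :=
    eq_of_le_of_finrank_le hle ((finrank_range_le_card v).trans hcard)
  exact hW ▸ subset_span

theorem stmt_17_general (m n : ℕ) (hn : n = (m - 1) ^ 2 + 1)
    (L : Submodule ℝ (Matrix (Fin m) (Fin m) ℝ))
    (hdim : Module.finrank ℝ L = n)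
    (hnorank1 : ∀ A ∈ L, A.rank ≠ 1)
    (T : Fin m → Fin m → Fin n → ℝ)
    (hspan : Submodule.span ℝ
      (Set.range fun p : Fin n => (Matrix.of fun i j => T i j p : Matrix (Fin m) (Fin m) ℝ)) = L) :
    n < trank T := by
  by_contra! hle
  obtain ⟨x, y, z, hxyz⟩ := hasRankDecomposition_trank T
  have hLW : L ≤ span ℝ (Set.range fun s => vecMulVec (x s) (y s)) := by
    rw [← hspan, span_le]
    rintro _ ⟨p, rfl⟩
    exact slice_mem_span_vecMulVec T hxyz p
  have hmem : ∀ s, vecMulVec (x s) (y s) ∈ L := fun s =>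
    range_subset_of_le_span_of_card_le_finrank hLW (by simpa [hdim] using hle) ⟨s, rfl⟩
  have hzero : ∀ s, vecMulVec (x s) (y s) = 0 := fun s =>
    vecMulVec_eq_zero_of_mem hnorank1 (hmem s)
  have hL : L = ⊥ := eq_bot_iff.2 <| hLW.trans (span_eq_bot.2 <| by
    rintro _ ⟨s, rfl⟩
    exact hzero s).le
  rw [hL, finrank_bot] at hdim
  omega

theorem stmt_17 (m n : ℕ) (hm : 2 ≤ m) (hn : n = (m - 1) ^ 2 + 1)
    (L : Submodule ℝ (Matrix (Fin m) (Fin m) ℝ))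
    (hdim : Module.finrank ℝ L = n)
    (hnorank1 : ∀ A ∈ L, A.rank ≠ 1)
    (T : Fin m → Fin m → Fin n → ℝ)
    (hind : LinearIndependent ℝ
      (fun p : Fin n => (Matrix.of fun i j => T i j p : Matrix (Fin m) (Fin m) ℝ)))
    (hspan : Submodule.span ℝ
      (Set.range fun p : Fin n => (Matrix.of fun i j => T i j p : Matrix (Fin m) (Fin m) ℝ)) = L) :
    n < trank T :=
  stmt_17_general m n hn L hdim hnorank1 T hspan
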